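/- Fix an even context length L and set h = L/2. In the ISWI schedule, at any prediction step T ≥ h (i.e., any step in stage i = ⌊T/h⌋ ≥ 1), the active inference instance has accumulated context covering at least the last h events; equivalently, the number of events held in the active instance's cache at step T is at least h and at most L. -/

import Mathlib

/-- Number of events held by the active ISWI instance at step `T` (stage
`i = ⌊T/h⌋ ≥ 1`): the active instance last cleared its cache at the end of
stage `i - 2`, so it has accumulated all events from the start of stage
`i - 1` (step `(i-1)·h`) through step `T`. -/
def iswiActiveCache (h T : ℕ) : ℕ := T - (T / h - 1) * h + 1

/-! The active instance holds the whole previous stage (`h` events) plus the `T % h + 1` events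
of the current one, and `T % h < h`. -/

section

variable {h T : ℕ}

theorem iswiActiveCache_eq (hh : 0 < h) (hT : h ≤ T) :
    iswiActiveCache h T = h + T % h + 1 := by
  have hstage : 1 ≤ T / h := (Nat.one_le_div_iff hh).mpr hT
  have hdecomp : T / h * h + T % h = T := Nat.div_add_mod' T h
  have hprev : (T / h - 1) * h + h = T / h * h := by
    rw [← Nat.succ_mul, Nat.succ_eq_add_one, Nat.sub_add_cancel hstage]
  unfold iswiActiveCache
  omega

theorem le_iswiActiveCache (hh : 0 < h) (hT : h ≤ T) : h ≤ iswiActiveCache h T := by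
  rw [iswiActiveCache_eq hh hT]
  omega

theorem iswiActiveCache_le_two_mul (hh : 0 < h) (hT : h ≤ T) :
    iswiActiveCache h T ≤ 2 * h := by
  rw [iswiActiveCache_eq hh hT]
  have := Nat.mod_lt T hh
  omega

end

/-- ISWI context guarantee: for an even context length `L` with `h = L/2`, at
any prediction step `T ≥ h` the active instance's cache holds at least `h` and
at most `L` events. -/
theorem iswi_active_cache_bounds
    (L T : ℕ) (hEven : L % 2 = 0) (hL : 0 < L)
    (hT : L / 2 ≤ T) :
    L / 2 ≤ iswiActiveCache (L / 2) T ∧ iswiActiveCache (L / 2) T ≤ L := by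
  have hh : 0 < L / 2 := by omega
  refine ⟨le_iswiActiveCache hh hT, ?_⟩
  calc iswiActiveCache (L / 2) T ≤ 2 * (L / 2) := iswiActiveCache_le_two_mul hh hT
    _ ≤ L := Nat.mul_div_le L 2
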